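/- Let f ∈ L²(ℝ) and let Z_{N,N'}γ(x,ξ) = Σ_{k=-N}^{N'} γ(x+k)e^{-2iπkξ} be the truncated Zak transform of γ(t) = exp(iπ(p/q)t²) (with p,q coprime integers, q ≥ 1). Then for f Schwartz, ⟨Zf, Z_{N,N'}γ⟩_{L²([0,1]²)} = ∫_{-N}^{N'+1} f(t)·exp(-iπ(p/q)t²) dt, where the inner product is conjugate-linear in the second argument. -/

import Mathlib

open Real MeasureTheory

noncomputable def Zak (f : ℝ → ℂ) (x ξ : ℝ) : ℂ :=
  ∑' k : ℤ, f (x + (k : ℝ)) * Complex.exp (-2 * (π : ℂ) * Complex.I * (k : ℂ) * (ξ : ℂ))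

/-- The chirp `γ(t) = exp(iπ(p/q)t²)`. -/
noncomputable def chirp (p : ℤ) (q : ℕ) (t : ℝ) : ℂ :=
  Complex.exp (Complex.I * (π : ℂ) * (p : ℂ) * (t : ℂ) ^ 2 / (q : ℂ))

/-!
For fixed `x`, `ξ ↦ Zf(x, ξ)` is an absolutely convergent Fourier series with coefficients
`f(x + j)` (Schwartz decay makes them summable), while the truncated Zak transform of `γ` is a
trigonometric polynomial with coefficients `γ(x + k)`, `-N ≤ k ≤ N'`. Orthonormality of the
characters `e^{-2πikξ}` on `[0, 1]` turns the `ξ`-integral into `∑ₖ f(x + k) conj(γ(x + k))`, and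
integrating over `x ∈ [0, 1]` glues the translated unit intervals `[k, k + 1]` into `[-N, N' + 1]`;
finally `conj γ(t) = e^{-iπ(p/q)t²}`.
-/

open Complex

local notation "𝐞" n:max ξ:max => Complex.exp (-2 * (π : ℂ) * Complex.I * (n : ℂ) * (ξ : ℂ))

theorem SchwartzMap.summable_norm_comp_add_int {F : Type*} [NormedAddCommGroup F]
    [NormedSpace ℝ F] (f : SchwartzMap ℝ F) (x : ℝ) :
    Summable fun j : ℤ => ‖f (x + j)‖ := by
  have hdecay := ((f.compSubConstCLM ℝ (-x)).isBigO_cocompact_rpow (-2)).norm_left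
  refine summable_of_isBigO (Real.summable_abs_int_rpow one_lt_two)
    ((hdecay.comp_tendsto Int.tendsto_coe_cofinite).congr (fun j => ?_) fun j => ?_)
  · simp [add_comm]
  · simp

theorem norm_exp_neg_two_pi_I_int_mul (n : ℤ) (ξ : ℝ) : ‖𝐞 n ξ‖ = 1 := by
  rw [show -2 * (π : ℂ) * I * n * ξ = ((-2 * π * n * ξ : ℝ) : ℂ) * I by push_cast; ring]
  exact norm_exp_ofReal_mul_I _

theorem exp_neg_two_pi_I_int_mul_mul_conj (j k : ℤ) (ξ : ℝ) :
    𝐞 j ξ * starRingEnd ℂ (𝐞 k ξ) = 𝐞 (j - k : ℤ) ξ := by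
  rw [← exp_conj, ← Complex.exp_add]
  congr 1
  simp only [map_mul, map_neg, map_ofNat, conj_ofReal, conj_I, map_intCast]
  push_cast
  ring

theorem integral_exp_neg_two_pi_I_int_mul (n : ℤ) :
    ∫ ξ in (0 : ℝ)..1, 𝐞 n ξ = if n = 0 then 1 else 0 := by
  split_ifs with hn
  · simp [hn]
  have hc : -2 * (π : ℂ) * I * n ≠ 0 := by simp [Real.pi_ne_zero, hn]
  rw [integral_exp_mul_complex hc]
  have hperiod : -2 * (π : ℂ) * I * n * (1 : ℝ) = (-n : ℤ) * (2 * π * I) := by push_cast; ring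
  rw [hperiod, exp_int_mul_two_pi_mul_I]
  simp

theorem integral_exp_neg_two_pi_I_int_mul_mul_conj_sum (j : ℤ) (s : Finset ℤ) (c : ℤ → ℂ) :
    ∫ ξ in (0 : ℝ)..1, 𝐞 j ξ * starRingEnd ℂ (∑ k ∈ s, c k * 𝐞 k ξ)
      = if j ∈ s then starRingEnd ℂ (c j) else 0 := by
  have hint (k : ℤ) : IntervalIntegrable (fun ξ : ℝ => 𝐞 j ξ * starRingEnd ℂ (c k * 𝐞 k ξ))
      volume 0 1 :=
    Continuous.intervalIntegrable (by fun_prop) _ _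
  simp_rw [map_sum, Finset.mul_sum]
  rw [intervalIntegral.integral_finsetSum fun k _ => hint k]
  simp_rw [map_mul, mul_left_comm _ (starRingEnd ℂ (c _)), exp_neg_two_pi_I_int_mul_mul_conj,
    intervalIntegral.integral_const_mul, integral_exp_neg_two_pi_I_int_mul, sub_eq_zero, mul_ite,
    mul_one, mul_zero, Finset.sum_ite_eq]

theorem integral_tsum_mul_conj_sum {a : ℤ → ℂ} (ha : Summable fun j => ‖a j‖) (s : Finset ℤ)
    (c : ℤ → ℂ) :
    ∫ ξ in (0 : ℝ)..1, (∑' j, a j * 𝐞 j ξ) * starRingEnd ℂ (∑ k ∈ s, c k * 𝐞 k ξ)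
      = ∑ k ∈ s, a k * starRingEnd ℂ (c k) := by
  set P : ℝ → ℂ := fun ξ => starRingEnd ℂ (∑ k ∈ s, c k * 𝐞 k ξ)
  have hP_le (ξ : ℝ) : ‖P ξ‖ ≤ ∑ k ∈ s, ‖c k‖ := by
    refine (RCLike.norm_conj _).trans_le ((norm_sum_le _ _).trans_eq ?_)
    simp only [norm_mul, norm_exp_neg_two_pi_I_int_mul, mul_one]
  have hterm (j : ℤ) : ∫ ξ in (0 : ℝ)..1, a j * 𝐞 j ξ * P ξ
      = if j ∈ s then a j * starRingEnd ℂ (c j) else 0 := by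
    simp_rw [mul_assoc (a j)]
    rw [intervalIntegral.integral_const_mul, integral_exp_neg_two_pi_I_int_mul_mul_conj_sum]
    split_ifs <;> simp
  have hseries (ξ : ℝ) : Summable fun j => a j * 𝐞 j ξ :=
    ha.of_norm_bounded fun j => by rw [norm_mul, norm_exp_neg_two_pi_I_int_mul, mul_one]
  have hbound (j : ℤ) (ξ : ℝ) : ‖a j * 𝐞 j ξ * P ξ‖ ≤ ‖a j‖ * ∑ k ∈ s, ‖c k‖ := by
    rw [norm_mul, norm_mul, norm_exp_neg_two_pi_I_int_mul, mul_one]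
    exact mul_le_mul_of_nonneg_left (hP_le ξ) (norm_nonneg _)
  have hsum := intervalIntegral.hasSum_integral_of_dominated_convergence (a := 0) (b := 1)
    (μ := volume) (F := fun j ξ => a j * 𝐞 j ξ * P ξ) (fun j _ => ‖a j‖ * ∑ k ∈ s, ‖c k‖)
    (fun j => Continuous.aestronglyMeasurable (by fun_prop))
    (fun j => ae_of_all _ fun ξ _ => hbound j ξ) (ae_of_all _ fun _ _ => ha.mul_right _)
    intervalIntegrable_const (ae_of_all _ fun ξ _ => (hseries ξ).hasSum.mul_right (P ξ))
  simp only [hterm] at hsum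
  refine hsum.unique ?_
  have hfin := hasSum_sum_of_ne_finset_zero (L := SummationFilter.unconditional ℤ)
    (f := fun j => if j ∈ s then a j * starRingEnd ℂ (c j) else 0) fun j hj => if_neg hj
  rwa [Finset.sum_congr rfl fun k hk => if_pos hk] at hfin

theorem sum_integral_comp_add_int_Ico {E : Type*} [NormedAddCommGroup E] [NormedSpace ℝ E]
    {g : ℝ → E} (hg : LocallyIntegrable g) {m n : ℤ} (hmn : m ≤ n) :
    ∑ k ∈ Finset.Ico m n, ∫ x in (0 : ℝ)..1, g (x + k) = ∫ x in (m : ℝ)..n, g x := by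
  induction n, hmn using Int.leInduction with
  | base => simp
  | succ n hmn ih =>
    have hint (a b : ℝ) : IntervalIntegrable g volume a b :=
      (hg.integrableOn_isCompact isCompact_uIcc).intervalIntegrable
    rw [← Finset.insert_Ico_right_eq_Ico_add_one hmn, Finset.sum_insert Finset.right_notMem_Ico,
      ih, intervalIntegral.integral_comp_add_right, zero_add, add_comm (1 : ℝ), Int.cast_add,
      Int.cast_one, add_comm (∫ x in (n : ℝ)..n + 1, g x),
      intervalIntegral.integral_add_adjacent_intervals (hint _ _) (hint _ _)]

theorem conj_chirp (p : ℤ) (q : ℕ) (t : ℝ) :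
    starRingEnd ℂ (chirp p q t) = Complex.exp (-I * π * p * t ^ 2 / q) := by
  rw [chirp, ← exp_conj]
  simp only [map_div₀, map_mul, map_pow, conj_I, conj_ofReal, map_intCast, map_natCast]

theorem inner_zak_truncated_zak_chirp_general (p : ℤ) (q : ℕ) (N N' : ℕ) (f : SchwartzMap ℝ ℂ) :
    (∫ x in (0:ℝ)..1, ∫ ξ in (0:ℝ)..1,
        Zak (⇑f) x ξ *
          (starRingEnd ℂ) (∑ k ∈ Finset.Icc (-(N : ℤ)) (N' : ℤ),
            chirp p q (x + (k : ℝ)) * Complex.exp (-2 * (π : ℂ) * Complex.I * (k : ℂ) * (ξ : ℂ))))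
      = ∫ t in (-(N : ℝ))..((N' : ℝ) + 1),
          f t * Complex.exp (-Complex.I * (π : ℂ) * (p : ℂ) * (t : ℂ) ^ 2 / (q : ℂ)) := by
  set g : ℝ → ℂ := fun t => f t * Complex.exp (-I * π * p * t ^ 2 / q) with hg_def
  have hg : Continuous g := by fun_prop
  calc _ = ∫ x in (0 : ℝ)..1, ∑ k ∈ Finset.Ico (-(N : ℤ)) (N' + 1), g (x + k) := by
        refine intervalIntegral.integral_congr fun x _ => ?_
        rw [Finset.Ico_add_one_right_eq_Icc]
        simp only [hg_def, ← conj_chirp]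
        exact integral_tsum_mul_conj_sum (f.summable_norm_comp_add_int x) _ _
    _ = ∫ x in ((-N : ℤ) : ℝ)..((N' + 1 : ℤ) : ℝ), g x := by
        rw [intervalIntegral.integral_finsetSum (f := fun (k : ℤ) x => g (x + k))
          fun k _ => (hg.comp (by fun_prop)).intervalIntegrable _ _]
        exact sum_integral_comp_add_int_Ico hg.locallyIntegrable (by omega)
    _ = _ := by push_cast; rfl

theorem inner_zak_truncated_zak_chirp (p : ℤ) (q : ℕ) (hq : 1 ≤ q)
    (hcop : Int.gcd p (q : ℤ) = 1) (N N' : ℕ) (f : SchwartzMap ℝ ℂ) :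
    (∫ x in (0:ℝ)..1, ∫ ξ in (0:ℝ)..1,
        Zak (⇑f) x ξ *
          (starRingEnd ℂ) (∑ k ∈ Finset.Icc (-(N : ℤ)) (N' : ℤ),
            chirp p q (x + (k : ℝ)) * Complex.exp (-2 * (π : ℂ) * Complex.I * (k : ℂ) * (ξ : ℂ))))
      = ∫ t in (-(N : ℝ))..((N' : ℝ) + 1),
          f t * Complex.exp (-Complex.I * (π : ℂ) * (p : ℂ) * (t : ℂ) ^ 2 / (q : ℂ)) :=
  inner_zak_truncated_zak_chirp_general p q N N' f
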